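/- Let f be a continuous density on [0,1] with CDF F, fix ℓ ≥ 2 and u_1,...,u_ℓ ≥ 0 with s := Σ_{i=1}^ℓ u_i ≤ 1, and set β = f(0)·(1-s), y_i = 1 - F(u_i). Assume F is right-differentiable at 0 with F'(0) = f(0). Then, with c_k = (1-s)/(k-ℓ), lim_{k→∞} (1/k) Σ_{a=0}^{ℓ-1} Σ_{b=0}^{k-ℓ} [C(k-ℓ,b)/C(k-1,a+b)] e_a(y_2,...,y_ℓ) (1-F(c_k))^b = Σ_{a=0}^{ℓ-1} (∫_0^1 t^a(1-t)^{ℓ-1-a} e^{-βt} dt) · e_a(y_2,...,y_ℓ). -/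

import Mathlib

open Finset Filter Topology

lemma aux_prod (p q : ℕ) :
    (p.factorial : ℂ) * ∏ j ∈ Finset.range (q+1), ((p:ℂ)+1+j) = ((p+q+1).factorial : ℂ) := by
  induction q with
  | zero =>
      rw [Finset.prod_range_one]
      have h : (p+0+1).factorial = (p+1)*p.factorial := by simp [Nat.factorial_succ]
      rw [h]; push_cast; ring
  | succ q ih =>
      rw [Finset.prod_range_succ, ← mul_assoc, ih]
      have h : (p + (q+1) + 1).factorial = (p+q+1+1) * (p+q+1).factorial := by
        have h2 : p + (q+1) + 1 = (p+q+1)+1 := by omega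
        rw [h2, Nat.factorial_succ]
      rw [h]; push_cast; ring

lemma beta_nat (p q : ℕ) :
    ∫ t in (0:ℝ)..1, t^p * (1-t)^q
      = (p.factorial : ℝ) * q.factorial / (p+q+1).factorial := by
  have hre : 0 < ((p:ℂ)+1).re := by simp; positivity
  have h := Complex.betaIntegral_eval_nat_add_one_right hre q
  have h2 : Complex.betaIntegral ((p:ℂ)+1) ((q:ℂ)+1)
      = ((∫ t in (0:ℝ)..1, t^p * (1-t)^q : ℝ) : ℂ) := by
    rw [Complex.betaIntegral, ← intervalIntegral.integral_ofReal]
    apply intervalIntegral.integral_congr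
    intro t _
    push_cast
    rw [add_sub_cancel_right, add_sub_cancel_right, Complex.cpow_natCast, Complex.cpow_natCast]
  rw [h2] at h
  have h3 : (∏ j ∈ Finset.range (q+1), ((p:ℂ)+1+j)) ≠ 0 := by
    intro h0
    have := aux_prod p q
    rw [h0, mul_zero] at this
    exact (Nat.cast_ne_zero.mpr (p+q+1).factorial_ne_zero) this.symm
  have h4 : ((∫ t in (0:ℝ)..1, t^p * (1-t)^q : ℝ) : ℂ)
      = (p.factorial : ℂ) * q.factorial / (p+q+1).factorial := by
    rw [h, ← aux_prod p q,
      div_eq_div_iff h3 (mul_ne_zero (Nat.cast_ne_zero.mpr p.factorial_ne_zero) h3)]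
    ring
  exact Complex.ofReal_inj.mp (h4.trans (by push_cast; ring))

lemma choose_inv (n j : ℕ) (h : j ≤ n) :
    ∫ t in (0:ℝ)..1, t^j * (1-t)^(n-j) = 1 / (((n:ℝ)+1) * (n.choose j)) := by
  rw [beta_nat]
  have h1 : j + (n-j) + 1 = n+1 := by omega
  rw [h1]
  have h2 : ((n.choose j : ℝ)) * (j.factorial) * ((n-j).factorial) = n.factorial := by
    exact_mod_cast congrArg (Nat.cast : ℕ → ℝ) (Nat.choose_mul_factorial_mul_factorial h)
  have h3 : ((n+1).factorial : ℝ) = ((n:ℝ)+1) * n.factorial := by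
    rw [Nat.factorial_succ]; push_cast; ring
  rw [h3, ← h2]
  have hc : (0:ℝ) < n.choose j := by exact_mod_cast Nat.choose_pos h
  have hf1 : (0:ℝ) < j.factorial := by exact_mod_cast j.factorial_pos
  have hf2 : (0:ℝ) < (n-j).factorial := by exact_mod_cast (n-j).factorial_pos
  have hn : (0:ℝ) < (n:ℝ)+1 := by positivity
  field_simp

lemma sum_eq (ℓ k a : ℕ) (hk : ℓ + 1 ≤ k) (ha : a < ℓ) (φ : ℝ) :
    (1/(k:ℝ)) * ∑ b ∈ Finset.range (k-ℓ+1),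
        ((k-ℓ).choose b : ℝ)/((k-1).choose (a+b)) * (1-φ)^b
    = ∫ t in (0:ℝ)..1, t^a * (1-t)^(ℓ-1-a) * (1 - φ*t)^(k-ℓ) := by
  set m := k - ℓ with hm
  have hcast : ((k:ℝ)) = ((k-1:ℕ):ℝ) + 1 := by
    have : (1:ℕ) ≤ k := by omega
    push_cast [Nat.cast_sub this]; ring
  have step1 : ∀ b ∈ Finset.range (m+1),
      (1/(k:ℝ)) * (((m.choose b : ℝ))/((k-1).choose (a+b)) * (1-φ)^b)
      = ∫ t in (0:ℝ)..1, (m.choose b : ℝ) * (1-φ)^b * (t^(a+b) * (1-t)^((k-1)-(a+b))) := by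
    intro b hb
    rw [Finset.mem_range] at hb
    have hab : a + b ≤ k - 1 := by omega
    rw [intervalIntegral.integral_const_mul, choose_inv (k-1) (a+b) hab, ← hcast]
    ring
  rw [Finset.mul_sum, Finset.sum_congr rfl step1,
    ← intervalIntegral.integral_finset_sum (fun b _ => (Continuous.intervalIntegrable (by continuity) _ _))]
  apply intervalIntegral.integral_congr
  intro t _
  show ∑ b ∈ Finset.range (m+1), (m.choose b : ℝ) * (1-φ)^b * (t^(a+b) * (1-t)^((k-1)-(a+b)))
      = t^a * (1-t)^(ℓ-1-a) * (1 - φ*t)^m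
  have hexp : ∀ b ∈ Finset.range (m+1), (m.choose b : ℝ) * (1-φ)^b * (t^(a+b) * (1-t)^((k-1)-(a+b)))
      = t^a * (1-t)^(ℓ-1-a) * (((1-φ)*t)^b * (1-t)^(m-b) * (m.choose b : ℝ)) := by
    intro b hb
    rw [Finset.mem_range] at hb
    have h2 : (k-1)-(a+b) = (ℓ-1-a)+(m-b) := by omega
    rw [h2, pow_add, pow_add, mul_pow]
    ring
  rw [Finset.sum_congr rfl hexp, ← Finset.mul_sum, ← add_pow]
  congr 1
  ring

lemma pow_exp_lim {m : ℕ → ℕ} (hm : Tendsto m atTop atTop) {u : ℕ → ℝ} {L : ℝ}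
    (h : Tendsto (fun n => (m n : ℝ) * u n) atTop (𝓝 L)) :
    Tendsto (fun n => (1 + u n) ^ (m n)) atTop (𝓝 (Real.exp L)) := by
  have hm' : Tendsto (fun n => (m n : ℝ)) atTop atTop :=
    tendsto_natCast_atTop_atTop.comp hm
  have hmpos : ∀ᶠ n in atTop, 0 < m n := hm.eventually (eventually_gt_atTop 0)
  have hu : Tendsto u atTop (𝓝 0) := by
    have h1 : Tendsto (fun n => ((m n : ℝ))⁻¹) atTop (𝓝 0) := hm'.inv_tendsto_atTop
    have h2 := h.mul h1
    rw [mul_zero] at h2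
    apply h2.congr'
    filter_upwards [hmpos] with n hn
    have : (m n : ℝ) ≠ 0 := Nat.cast_ne_zero.mpr hn.ne'
    field_simp
  have h2 : ∀ᶠ n in atTop, |u n| ≤ 1/2 := by
    have := NormedAddCommGroup.tendsto_nhds_zero.mp hu (1/2) (by norm_num)
    filter_upwards [this] with n hn
    rw [Real.norm_eq_abs] at hn; linarith
  have key : Tendsto (fun n => (m n : ℝ) * Real.log (1 + u n)) atTop (𝓝 L) := by
    have hrem : Tendsto (fun n => (m n : ℝ) * (Real.log (1 + u n) - u n)) atTop (𝓝 0) := by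
      have hg : Tendsto (fun n => 2 * |(m n : ℝ) * u n| * |u n|) atTop (𝓝 0) := by
        have := ((h.abs.const_mul 2).mul hu.abs)
        simpa using this
      apply squeeze_zero_norm' _ hg
      filter_upwards [h2, hmpos] with n hn hmn
      have hlt : |(-(u n))| < 1 := by rw [abs_neg]; linarith [abs_nonneg (u n)]
      have hb := Real.abs_log_sub_add_sum_range_le hlt 1
      simp only [Finset.sum_range_one, pow_one, Nat.cast_zero, zero_add, div_one,
        sub_neg_eq_add] at hb
      norm_num at hb
      have h1u : (1:ℝ) - |u n| ≥ 1/2 := by linarith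
      have hb2 : |Real.log (1 + u n) - u n| ≤ 2 * (u n)^2 := by
        have e1 : |Real.log (1 + u n) - u n| = |(-(u n)) + Real.log (1 + u n)| := by
          congr 1; ring
        have e2 : |u n|^2 / (1 - |u n|) ≤ 2 * (u n)^2 := by
          rw [div_le_iff₀ (by linarith)]
          have : |u n|^2 = (u n)^2 := sq_abs _
          nlinarith [sq_nonneg (u n), abs_nonneg (u n)]
        calc |Real.log (1 + u n) - u n| = |(-(u n)) + Real.log (1 + u n)| := e1
          _ ≤ |u n|^2 / (1 - |u n|) := by rw [sq_abs]; exact hb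
          _ ≤ 2 * (u n)^2 := e2
      have h5 : ‖(m n : ℝ) * (Real.log (1 + u n) - u n)‖
          = (m n : ℝ) * |Real.log (1 + u n) - u n| := by
        rw [Real.norm_eq_abs, abs_mul, Nat.abs_cast]
      rw [h5]
      have h6 : 2 * |(m n : ℝ) * u n| * |u n| = (m n : ℝ) * (2 * (u n)^2) := by
        rw [abs_mul, Nat.abs_cast, ← sq_abs]
        ring
      rw [h6]
      exact mul_le_mul_of_nonneg_left hb2 (Nat.cast_nonneg _)
    have h7 := h.add hrem
    rw [add_zero] at h7
    apply h7.congr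
    intro n; ring
  have hexp := (Real.continuous_exp.tendsto L).comp key
  apply hexp.congr'
  filter_upwards [h2] with n hn
  have hpos : 0 < 1 + u n := by
    rcases abs_le.1 hn with ⟨h1, _⟩; linarith
  show Real.exp ((m n : ℝ) * Real.log (1 + u n)) = (1 + u n) ^ m n
  rw [Real.exp_nat_mul, Real.exp_log hpos]

lemma mF_lim (F : ℝ → ℝ) (f0 : ℝ) (hF00 : F 0 = 0)
    (hF0 : HasDerivWithinAt F f0 (Set.Ici 0) 0) (ℓ : ℕ) (s : ℝ) (hs1 : s ≤ 1) :
    Tendsto (fun k : ℕ => ((k:ℝ) - ℓ) * F ((1-s)/((k:ℝ)-ℓ))) atTop (𝓝 (f0 * (1-s))) := by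
  rcases eq_or_lt_of_le hs1 with hs | hs
  · subst hs
    simp only [sub_self, zero_div, hF00, mul_zero]
    exact tendsto_const_nhds
  · have h1s : 0 < 1 - s := by linarith
    have hd : Tendsto (fun k : ℕ => (k:ℝ) - ℓ) atTop atTop :=
      tendsto_atTop_add_const_right _ _ tendsto_natCast_atTop_atTop
    have hc0 : Tendsto (fun k : ℕ => (1-s)/((k:ℝ)-ℓ)) atTop (𝓝 0) := by
      have := hd.inv_tendsto_atTop.const_mul (1-s)
      rw [mul_zero] at this
      exact this.congr (fun k => by simp [div_eq_mul_inv])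
    have hcmem : ∀ᶠ k : ℕ in atTop, (1-s)/((k:ℝ)-ℓ) ∈ Set.Ioi (0:ℝ) := by
      filter_upwards [hd.eventually (eventually_gt_atTop 0)] with k hk
      exact div_pos h1s hk
    have hc : Tendsto (fun k : ℕ => (1-s)/((k:ℝ)-ℓ)) atTop (𝓝[Set.Ioi 0] 0) :=
      tendsto_nhdsWithin_iff.mpr ⟨hc0, hcmem⟩
    have hsub : Set.Ioi (0:ℝ) ⊆ Set.Ici 0 \ {0} := fun x hx => ⟨Set.mem_Ici.mpr (le_of_lt (Set.mem_Ioi.mp hx)), ne_of_gt (Set.mem_Ioi.mp hx)⟩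
    have hslope := hasDerivWithinAt_iff_tendsto_slope.mp hF0
    have h2 : Tendsto (fun k : ℕ => slope F 0 ((1-s)/((k:ℝ)-ℓ))) atTop (𝓝 f0) :=
      hslope.comp (hc.mono_right (nhdsWithin_mono _ hsub))
    have h3 := h2.const_mul (1-s)
    have h4 : Tendsto (fun k : ℕ => (1-s) * slope F 0 ((1-s)/((k:ℝ)-ℓ))) atTop
        (𝓝 (f0 * (1-s))) := by
      rw [mul_comm] at h3; exact h3
    apply h4.congr'
    filter_upwards [hd.eventually (eventually_gt_atTop 0)] with k hk
    have hkne : (k:ℝ) - ℓ ≠ 0 := ne_of_gt hk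
    rw [slope_def_field, hF00]
    have h1ne : (1:ℝ) - s ≠ 0 := h1s.ne'
    generalize F ((1-s)/((k:ℝ)-ℓ)) = y
    simp only [sub_zero]
    field_simp

lemma integral_lim (ℓ a K : ℕ) (β : ℝ) (φ : ℕ → ℝ)
    (hK : ℓ + 1 ≤ K)
    (hbound : ∀ n : ℕ, |((n + K - ℓ : ℕ) : ℝ) * φ n| ≤ |β| + 1)
    (hφlim : Tendsto (fun n => ((n + K - ℓ : ℕ) : ℝ) * φ n) atTop (𝓝 β)) :
    Tendsto (fun n => ∫ t in (0:ℝ)..1, t^a * (1-t)^(ℓ-1-a) * (1 - φ n * t)^(n + K - ℓ)) atTop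
      (𝓝 (∫ t in (0:ℝ)..1, t^a * (1-t)^(ℓ-1-a) * Real.exp (-β * t))) := by
  set m : ℕ → ℕ := fun n => n + K - ℓ with hmdef
  have hm : Tendsto m atTop atTop := by
    apply tendsto_atTop_atTop_of_monotone
    · intro i j hij; simp only [hmdef]; omega
    · intro N; exact ⟨N + ℓ, by simp only [hmdef]; omega⟩
  have hm1 : ∀ n, 1 ≤ m n := fun n => by simp only [hmdef]; omega
  simp only [intervalIntegral.integral_of_le (zero_le_one (α := ℝ))]
  apply MeasureTheory.tendsto_integral_of_dominated_convergence
      (bound := fun _ => Real.exp (|β|+1))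
  · intro n
    exact ((by fun_prop : Continuous fun t : ℝ =>
      t^a * (1-t)^(ℓ-1-a) * (1 - φ n * t)^(m n))).aestronglyMeasurable
  · exact (MeasureTheory.integrableOn_const_iff).mpr (Or.inr measure_Ioc_lt_top)
  · intro n
    rw [MeasureTheory.ae_restrict_iff' measurableSet_Ioc]
    apply MeasureTheory.ae_of_all
    intro t ht
    obtain ⟨ht0, ht1⟩ := ht
    have hM : (1:ℝ) ≤ (m n : ℝ) := by exact_mod_cast hm1 n
    have hMpos : (0:ℝ) < (m n : ℝ) := by linarith
    have hφn : |φ n| ≤ (|β|+1) / (m n : ℝ) := by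
      rw [le_div_iff₀ hMpos]
      have := hbound n
      rw [abs_mul, Nat.abs_cast] at this
      linarith [this]
    have h1 : |t^a| ≤ 1 := by
      rw [abs_pow]
      exact pow_le_one₀ (abs_nonneg t) (by rw [abs_of_pos ht0]; exact ht1)
    have h2 : |(1-t)^(ℓ-1-a)| ≤ 1 := by
      rw [abs_pow]
      exact pow_le_one₀ (abs_nonneg _) (by rw [abs_of_nonneg (by linarith)]; linarith)
    have h3 : |(1 - φ n * t)^(m n)| ≤ Real.exp (|β|+1) := by
      rw [abs_pow]
      have hb1 : |1 - φ n * t| ≤ 1 + (|β|+1)/(m n : ℝ) := by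
        calc |1 - φ n * t| ≤ |1| + |φ n * t| := abs_sub _ _
          _ = 1 + |φ n| * |t| := by rw [abs_one, abs_mul]
          _ ≤ 1 + |φ n| * 1 := by
              have := abs_nonneg (φ n)
              have ht' : |t| ≤ 1 := by rw [abs_of_pos ht0]; exact ht1
              nlinarith
          _ ≤ 1 + (|β|+1)/(m n : ℝ) := by rw [mul_one]; linarith
      calc |1 - φ n * t| ^ (m n) ≤ (1 + (|β|+1)/(m n : ℝ)) ^ (m n) :=
            pow_le_pow_left₀ (abs_nonneg _) hb1 _
        _ ≤ Real.exp ((|β|+1)/(m n : ℝ)) ^ (m n) := by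
            apply pow_le_pow_left₀ _ _
            · positivity
            · linarith [Real.add_one_le_exp ((|β|+1)/(m n : ℝ))]
        _ = Real.exp ((m n : ℝ) * ((|β|+1)/(m n : ℝ))) := (Real.exp_nat_mul _ _).symm
        _ = Real.exp (|β|+1) := by rw [mul_div_cancel₀ _ (ne_of_gt hMpos)]
    calc ‖t^a * (1-t)^(ℓ-1-a) * (1 - φ n * t)^(m n)‖
        = |t^a| * |(1-t)^(ℓ-1-a)| * |(1 - φ n * t)^(m n)| := by
          rw [Real.norm_eq_abs, abs_mul, abs_mul]
      _ ≤ 1 * 1 * Real.exp (|β|+1) := by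
          apply mul_le_mul _ h3 (abs_nonneg _) (by norm_num)
          apply mul_le_mul h1 h2 (abs_nonneg _) (by norm_num)
      _ = Real.exp (|β|+1) := by ring
  · apply MeasureTheory.ae_of_all
    intro t
    have H : Tendsto (fun n => (1 - φ n * t)^(m n)) atTop (𝓝 (Real.exp (-β * t))) := by
      have hu : Tendsto (fun n => (m n : ℝ) * (-(φ n) * t)) atTop (𝓝 (-β * t)) := by
        have := (hφlim.neg).mul_const t
        apply this.congr
        intro n; ring
      have := pow_exp_lim hm hu
      apply this.congr
      intro n
      congr 1
      ring
    have := H.const_mul (t^a * (1-t)^(ℓ-1-a))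
    apply this.congr
    intro n; ring

/-- Asymptotic (k → ∞) one-sided IT cut density when the suffix coordinates are all
equal to `c_k = (1-s)/(k-ℓ)`: with `β = f(0)(1-s)` and `y_i = 1 - F(u_i)`,
`lim_{k→∞} (1/k) Σ_{a<ℓ} Σ_{b≤k-ℓ} [C(k-ℓ,b)/C(k-1,a+b)] e_a(y) (1-F(c_k))^b
  = Σ_{a<ℓ} (∫_0^1 t^a (1-t)^{ℓ-1-a} e^{-βt} dt) e_a(y)`. -/
theorem it_density_asymptotic (f F : ℝ → ℝ) (hf : Continuous f)
    (hFdef : ∀ x, F x = ∫ t in (0 : ℝ)..x, f t)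
    (hF0 : HasDerivWithinAt F (f 0) (Set.Ici 0) 0)
    (ℓ : ℕ) (hℓ : 2 ≤ ℓ) (u : Fin ℓ → ℝ) (hu : ∀ i, 0 ≤ u i)
    (s : ℝ) (hs : ∑ i, u i = s) (hs1 : s ≤ 1) :
    let i0 : Fin ℓ := ⟨0, by omega⟩
    let β : ℝ := f 0 * (1 - s)
    let e : ℕ → ℝ := fun a =>
      ∑ A ∈ Finset.powersetCard a (Finset.univ.erase i0), ∏ i ∈ A, (1 - F (u i))
    Tendsto (fun k : ℕ =>
        (1 / (k : ℝ)) * ∑ a ∈ Finset.range ℓ, ∑ b ∈ Finset.range (k - ℓ + 1),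
          ((Nat.choose (k - ℓ) b : ℝ) / (Nat.choose (k - 1) (a + b) : ℝ)) *
            e a * (1 - F ((1 - s) / ((k : ℝ) - ℓ))) ^ b)
      atTop
      (nhds (∑ a ∈ Finset.range ℓ,
        (∫ t in (0 : ℝ)..1, t ^ a * (1 - t) ^ (ℓ - 1 - a) * Real.exp (-β * t)) * e a)) := by
  intro i0 β e
  set φ : ℕ → ℝ := fun k => F ((1 - s) / ((k : ℝ) - ℓ)) with hφdef
  have hF00 : F 0 = 0 := by rw [hFdef 0, intervalIntegral.integral_same]
  have hlim : Tendsto (fun k : ℕ => ((k:ℝ) - ℓ) * φ k) atTop (𝓝 β) :=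
    mF_lim F (f 0) hF00 hF0 ℓ s hs1
  -- key algebraic identity
  have hkey : ∀ k : ℕ, ℓ + 1 ≤ k →
      (1 / (k : ℝ)) * ∑ a ∈ Finset.range ℓ, ∑ b ∈ Finset.range (k - ℓ + 1),
          ((Nat.choose (k - ℓ) b : ℝ) / (Nat.choose (k - 1) (a + b) : ℝ)) *
            e a * (1 - φ k) ^ b
      = ∑ a ∈ Finset.range ℓ,
          (∫ t in (0:ℝ)..1, t^a * (1-t)^(ℓ-1-a) * (1 - φ k * t)^(k-ℓ)) * e a := by
    intro k hk
    rw [Finset.mul_sum]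
    apply Finset.sum_congr rfl
    intro a ha
    rw [Finset.mem_range] at ha
    rw [← sum_eq ℓ k a hk ha (φ k)]
    have hsum : ∑ b ∈ Finset.range (k - ℓ + 1),
        ((Nat.choose (k - ℓ) b : ℝ) / (Nat.choose (k - 1) (a + b) : ℝ)) * e a * (1 - φ k) ^ b
        = (∑ b ∈ Finset.range (k - ℓ + 1),
            ((Nat.choose (k - ℓ) b : ℝ) / (Nat.choose (k - 1) (a + b) : ℝ)) * (1 - φ k) ^ b)
          * e a := by
      rw [Finset.sum_mul]
      exact Finset.sum_congr rfl (fun b _ => by ring)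
    rw [hsum]
    ring
  -- choose threshold K
  have hev : ∀ᶠ k : ℕ in atTop, ℓ + 1 ≤ k ∧ |((k:ℝ) - ℓ) * φ k| ≤ |β| + 1 := by
    filter_upwards [eventually_ge_atTop (ℓ+1),
      hlim.abs.eventually_lt_const (lt_add_one |β|)] with k h1 h2
    exact ⟨h1, le_of_lt h2⟩
  obtain ⟨K, hKall⟩ := eventually_atTop.mp hev
  have hK : ℓ + 1 ≤ K := (hKall K le_rfl).1
  rw [← tendsto_add_atTop_iff_nat K]
  have hcast : ∀ n : ℕ, ((n + K - ℓ : ℕ) : ℝ) = ((n + K : ℕ) : ℝ) - ℓ := by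
    intro n
    have : ℓ ≤ n + K := by omega
    push_cast [Nat.cast_sub this]
    ring
  refine Tendsto.congr (fun n => (hkey (n+K) (by omega)).symm) ?_
  apply tendsto_finset_sum
  intro a ha
  apply Tendsto.mul_const
  exact integral_lim ℓ a K β (fun n => φ (n + K)) hK
    (fun n => by rw [hcast n]; exact (hKall (n+K) (by omega)).2)
    ((hlim.comp (tendsto_add_atTop_nat K)).congr (fun n => by rw [hcast n]; rfl))
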